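/- Let N be a special convenient integral Newton-polygon datum with r ≥ 2 edges satisfying conditions (R1)–(R3). Then its reduction R(N) is a special convenient integral Newton-polygon datum with r−1 edges that again satisfies conditions (R1)–(R3). -/

import Mathlib

/-- A canonical Newton-polygon datum with `r` edges: a pair of `1`-indexed sequences
`(L, M)` of positive rationals with strictly increasing inclinations `L k / M k`. -/
def IsCanonicalNP (p : (ℕ → ℚ) × (ℕ → ℚ)) (r : ℕ) : Prop :=
  (∀ k, 1 ≤ k → k ≤ r → 0 < p.1 k ∧ 0 < p.2 k) ∧
  ∀ k, 1 ≤ k → k < r → p.1 k / p.2 k < p.1 (k + 1) / p.2 (k + 1)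

/-- An integral datum: all the entries are positive integers. -/
def IsIntegralNP (p : (ℕ → ℚ) × (ℕ → ℚ)) (r : ℕ) : Prop :=
  ∀ k, 1 ≤ k → k ≤ r →
    (∃ a : ℕ, 0 < a ∧ p.1 k = a) ∧ (∃ b : ℕ, 0 < b ∧ p.2 k = b)

/-- A special datum: all the inclinations are greater than `1`. -/
def IsSpecialNP (p : (ℕ → ℚ) × (ℕ → ℚ)) (r : ℕ) : Prop :=
  ∀ k, 1 ≤ k → k ≤ r → 1 < p.1 k / p.2 k

/-- The height `ht(N) = M_1 + ⋯ + M_r` of a Newton-polygon datum with `r` edges. -/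
def htNP (p : (ℕ → ℚ) × (ℕ → ℚ)) (r : ℕ) : ℚ := ∑ k ∈ Finset.Icc 1 r, p.2 k

/-- The reduction `R(N)`, with `L'_i = L_{i+1} − (L_1/(1+M_1))·M_{i+1}` and
`M'_i = M_{i+1}/(1+M_1)`; its iterates give `R^i(N)` via `redNP^[i] p`. -/
def redNP (p : (ℕ → ℚ) × (ℕ → ℚ)) : (ℕ → ℚ) × (ℕ → ℚ) :=
  (fun i => p.1 (i + 1) - (p.1 1 / (1 + p.2 1)) * p.2 (i + 1),
   fun i => p.2 (i + 1) / (1 + p.2 1))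

/-- Condition (R1): `1 + ht(N) < L_1/M_1`. -/
def CondR1 (p : (ℕ → ℚ) × (ℕ → ℚ)) (r : ℕ) : Prop :=
  1 + htNP p r < p.1 1 / p.2 1

/-- Condition (R2): for `0 ≤ i ≤ r−1`, all entries of `R^i(N)` are integers and
`L^{(i)}_1/M^{(i)}_1` is a (natural) integer. -/
def CondR2 (p : (ℕ → ℚ) × (ℕ → ℚ)) (r : ℕ) : Prop :=
  ∀ i, i ≤ r - 1 →
    (∀ k, 1 ≤ k → k ≤ r - i →
      (∃ a : ℤ, (redNP^[i] p).1 k = a) ∧ (∃ b : ℤ, (redNP^[i] p).2 k = b)) ∧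
    ∃ a : ℕ, (redNP^[i] p).1 1 / (redNP^[i] p).2 1 = a

/-- Condition (R3): for `0 ≤ i ≤ r−1`,
`(1 + M^{(i)}_1)·gcd(L^{(i)}_1/M^{(i)}_1, 1 + ht(R^i(N))) = 1 + ht(R^i(N))`
(the gcd of the two integer-valued rationals being taken via their numerators). -/
def CondR3 (p : (ℕ → ℚ) × (ℕ → ℚ)) (r : ℕ) : Prop :=
  ∀ i, i ≤ r - 1 →
    (1 + (redNP^[i] p).2 1) *
      (Nat.gcd ((redNP^[i] p).1 1 / (redNP^[i] p).2 1).num.natAbs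
        (1 + htNP (redNP^[i] p) (r - i)).num.natAbs : ℚ)
    = 1 + htNP (redNP^[i] p) (r - i)

/-!
Writing `s_k = L_k / M_k`, the inclinations of `R(N)` are `s'_k = (1 + M_1) s_{k+1} - L_1
= s_{k+1} + M_1 (s_{k+1} - s_1)`, an increasing affine image of those of `N` that dominates
`s_{k+1}`; this gives canonicity and speciality of `R(N)`. Its height is
`(ht N - M_1) / (1 + M_1)`, so `1 + ht R(N) = (1 + ht N) / (1 + M_1) < s_1 ≤ s'_1`, which is (R1).
Conditions (R2) and (R3) for `R(N)` are those for `N` shifted by one iterate, and the integer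
entries of `R(N)` provided by (R2) are positive, hence natural numbers.
-/

section Reduction

variable {p : (ℕ → ℚ) × (ℕ → ℚ)} {r : ℕ}

theorem IsCanonicalNP.slope_le_slope (hc : IsCanonicalNP p r) {j k : ℕ} (hj : 1 ≤ j)
    (hjk : j ≤ k) (hk : k ≤ r) : p.1 j / p.2 j ≤ p.1 k / p.2 k := by
  induction k, hjk using Nat.le_induction with
  | base => exact le_rfl
  | succ k hjk ih => exact (ih (by omega)).trans (hc.2 k (by omega) (by omega)).le

theorem redNP_slope {k : ℕ} (hM₁ : 1 + p.2 1 ≠ 0) (hM : p.2 (k + 1) ≠ 0) :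
    (redNP p).1 k / (redNP p).2 k = (1 + p.2 1) * (p.1 (k + 1) / p.2 (k + 1)) - p.1 1 := by
  simp only [redNP]
  field_simp

theorem htNP_redNP (n : ℕ) : htNP (redNP p) n = (htNP p (n + 1) - p.2 1) / (1 + p.2 1) := by
  induction n with
  | zero => simp [htNP]
  | succ n ih =>
    simp only [htNP] at ih ⊢
    rw [Finset.sum_Icc_succ_top (by omega), ih, Finset.sum_Icc_succ_top (by omega : 1 ≤ n + 2)]
    simp only [redNP]
    ring

theorem IsCanonicalNP.slope_succ_le_redNP_slope (hc : IsCanonicalNP p r) {k : ℕ} (hk : 1 ≤ k)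
    (hkr : k + 1 ≤ r) : p.1 (k + 1) / p.2 (k + 1) ≤ (redNP p).1 k / (redNP p).2 k := by
  have hM₁ := (hc.1 1 le_rfl (by omega)).2
  rw [redNP_slope (by positivity) (hc.1 (k + 1) (by omega) hkr).2.ne']
  have hs₁ := hc.slope_le_slope le_rfl (by omega : 1 ≤ k + 1) hkr
  rw [div_le_iff₀ hM₁] at hs₁
  nlinarith

theorem isCanonicalNP_redNP (hc : IsCanonicalNP p r) : IsCanonicalNP (redNP p) (r - 1) := by
  have hM₁ (hr : 1 ≤ r) : 0 < 1 + p.2 1 := by linarith [(hc.1 1 le_rfl hr).2]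
  refine ⟨fun k hk hkr => ?_, fun k hk hkr => ?_⟩
  · obtain ⟨hL, hM⟩ := hc.1 (k + 1) (by omega) (by omega)
    have hM' : 0 < (redNP p).2 k := div_pos hM (hM₁ (by omega))
    have hs' : 0 < (redNP p).1 k / (redNP p).2 k :=
      (div_pos hL hM).trans_le (hc.slope_succ_le_redNP_slope hk (by omega))
    exact ⟨(div_pos_iff_of_pos_right hM').mp hs', hM'⟩
  · have hM₁k := hM₁ (by omega)
    rw [redNP_slope hM₁k.ne' (hc.1 (k + 1) (by omega) (by omega)).2.ne',
      redNP_slope hM₁k.ne' (hc.1 (k + 1 + 1) (by omega) (by omega)).2.ne']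
    exact sub_lt_sub_right (mul_lt_mul_of_pos_left (hc.2 (k + 1) (by omega) (by omega)) hM₁k) _

theorem isSpecialNP_redNP (hc : IsCanonicalNP p r) (hs : IsSpecialNP p r) :
    IsSpecialNP (redNP p) (r - 1) := fun k hk hkr =>
  (hs (k + 1) (by omega) (by omega)).trans_le (hc.slope_succ_le_redNP_slope hk (by omega))

theorem condR1_redNP (hr : 2 ≤ r) (hc : IsCanonicalNP p r) (h1 : CondR1 p r) :
    CondR1 (redNP p) (r - 1) := by
  obtain ⟨hL₁, hM₁⟩ := hc.1 1 le_rfl (by omega)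
  have hht : 1 + htNP (redNP p) (r - 1) = (1 + htNP p r) / (1 + p.2 1) := by
    rw [htNP_redNP, Nat.sub_add_cancel (by omega : 1 ≤ r)]
    field_simp
    ring
  have hlt : (1 + htNP p r) / (1 + p.2 1) < p.1 1 / p.2 1 := by
    rw [div_lt_iff₀ (by positivity)]
    exact h1.trans (lt_mul_of_one_lt_right (div_pos hL₁ hM₁) (by linarith))
  rw [CondR1, hht]
  calc (1 + htNP p r) / (1 + p.2 1) < p.1 1 / p.2 1 := hlt
    _ ≤ p.1 (1 + 1) / p.2 (1 + 1) := hc.slope_le_slope le_rfl (by omega) (by omega)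
    _ ≤ (redNP p).1 1 / (redNP p).2 1 := hc.slope_succ_le_redNP_slope le_rfl (by omega)

theorem condR2_redNP (hr : 2 ≤ r) (h2 : CondR2 p r) : CondR2 (redNP p) (r - 1) := by
  intro i hi
  simpa only [← Function.iterate_succ_apply, Nat.sub_sub, Nat.add_comm 1 i]
    using h2 (i + 1) (by omega)

theorem condR3_redNP (hr : 2 ≤ r) (h3 : CondR3 p r) : CondR3 (redNP p) (r - 1) := by
  intro i hi
  simpa only [← Function.iterate_succ_apply, Nat.sub_sub, Nat.add_comm 1 i]
    using h3 (i + 1) (by omega)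

end Reduction

theorem exists_nat_pos_eq_of_int {q : ℚ} (hq : 0 < q) (h : ∃ a : ℤ, q = a) :
    ∃ n : ℕ, 0 < n ∧ q = n := by
  obtain ⟨a, rfl⟩ := h
  have ha : 0 < a := by exact_mod_cast hq
  exact ⟨a.toNat, by omega, by exact_mod_cast (Int.toNat_of_nonneg ha.le).symm⟩

theorem IsCanonicalNP.isIntegralNP {q : (ℕ → ℚ) × (ℕ → ℚ)} {n : ℕ} (hc : IsCanonicalNP q n)
    (hint : ∀ k, 1 ≤ k → k ≤ n → (∃ a : ℤ, q.1 k = a) ∧ ∃ b : ℤ, q.2 k = b) :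
    IsIntegralNP q n := fun k hk hkn =>
  ⟨exists_nat_pos_eq_of_int (hc.1 k hk hkn).1 (hint k hk hkn).1,
    exists_nat_pos_eq_of_int (hc.1 k hk hkn).2 (hint k hk hkn).2⟩

theorem reduction_preserves_conditions
    (p : (ℕ → ℚ) × (ℕ → ℚ)) (r : ℕ) (hr : 2 ≤ r)
    (hc : IsCanonicalNP p r) (hs : IsSpecialNP p r)
    (h1 : CondR1 p r) (h2 : CondR2 p r) (h3 : CondR3 p r) :
    IsCanonicalNP (redNP p) (r - 1) ∧ IsIntegralNP (redNP p) (r - 1) ∧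
    IsSpecialNP (redNP p) (r - 1) ∧
    CondR1 (redNP p) (r - 1) ∧ CondR2 (redNP p) (r - 1) ∧ CondR3 (redNP p) (r - 1) := by
  have hc' := isCanonicalNP_redNP hc
  have hint := hc'.isIntegralNP fun k hk hkr => by
    simpa only [Function.iterate_one] using (h2 1 (by omega)).1 k hk hkr
  exact ⟨hc', hint, isSpecialNP_redNP hc hs, condR1_redNP hr hc h1, condR2_redNP hr h2,
    condR3_redNP hr h3⟩
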